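/- Let E = ℝⁿ, let 0 ≤ L < 1, and let G : E → E be L-Lipschitz. Then the map H defined by H x = (−L²/(1 + L²))·x + (1/(1 + L²))·G x is Lipschitz with constant (2L/(1 + L²))·((1 + L)/2), and for 0 < L < 1 this constant is strictly less than 2L/(1 + L²). Consequently, if F = (1/(1 − L²))·(id + G) then ((1 − L²)/(1 + L²))·F − id is Lipschitz with constant strictly less than 2L/(1 + L²), so every function of the inverse residual formulation class I_L lies in the monotone formulation class M_L. -/

import Mathlib

/-!
Writing `p = x - y`, `q = F x - F y` and `a = (1 - L²)/(1 + L²)`, the map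
`a • F - id` equals `x ↦ (-L² • x + G x)/(1 + L²)`, so the triangle inequality bounds its
Lipschitz constant by `(L² + L)/(1 + L²) = (2L/(1 + L²)) · ((1 + L)/2)`. Since
`a² + (2L/(1 + L²))² = 1`, the resulting bound `‖a • q - p‖ ≤ (2L/(1 + L²)) ‖p‖` squares to
`a (‖p‖² + ‖q‖²) ≤ 2 ⟪p, q⟫`, which is also what `‖q - p‖ ≤ L ‖q + p‖` squares to.
-/

open RealInnerProductSpace

lemma norm_smul_add_smul_sub_le {E : Type*} [NormedAddCommGroup E] [NormedSpace ℝ E]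
    {G : E → E} {L : ℝ} (hG : ∀ x y, ‖G x - G y‖ ≤ L * ‖x - y‖) (α β : ℝ) (x y : E) :
    ‖(α • x + β • G x) - (α • y + β • G y)‖ ≤ (|α| + |β| * L) * ‖x - y‖ :=
  calc ‖(α • x + β • G x) - (α • y + β • G y)‖
      = ‖α • (x - y) + β • (G x - G y)‖ := by rw [smul_sub, smul_sub]; abel_nf
    _ ≤ |α| * ‖x - y‖ + |β| * ‖G x - G y‖ :=
        (norm_add_le _ _).trans_eq (by rw [norm_smul, norm_smul, Real.norm_eq_abs, Real.norm_eq_abs])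
    _ ≤ |α| * ‖x - y‖ + |β| * (L * ‖x - y‖) := by gcongr; exact hG x y
    _ = (|α| + |β| * L) * ‖x - y‖ := by ring

lemma norm_sub_le_mul_norm_add_of_norm_smul_sub_le {E : Type*} [NormedAddCommGroup E]
    [InnerProductSpace ℝ E] {L : ℝ} (hL0 : 0 ≤ L) (hL1 : L < 1) {p q : E}
    (h : ‖((1 - L ^ 2) / (1 + L ^ 2)) • q - p‖ ≤ 2 * L / (1 + L ^ 2) * ‖p‖) :
    ‖q - p‖ ≤ L * ‖q + p‖ := by
  have hsq := pow_le_pow_left₀ (norm_nonneg _) h 2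
  rw [norm_sub_sq_real, norm_smul, inner_smul_left, conj_trivial, Real.norm_eq_abs, mul_pow,
    sq_abs] at hsq
  have hpos : 0 < 1 - L ^ 2 := by nlinarith
  have hpolar : (1 - L ^ 2) * (‖q‖ ^ 2 + ‖p‖ ^ 2) ≤ 2 * (1 + L ^ 2) * ⟪q, p⟫ := by
    field_simp at hsq
    nlinarith
  refine pow_le_pow_iff_left₀ (norm_nonneg _) (by positivity) two_ne_zero |>.mp ?_
  rw [mul_pow, norm_sub_sq_real, norm_add_sq_real]
  linarith

theorem inverse_residual_subset_monotone_formulation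
    (n : ℕ) (L : ℝ) (hL0 : 0 ≤ L) (hL1 : L < 1)
    (G : EuclideanSpace ℝ (Fin n) → EuclideanSpace ℝ (Fin n))
    (hG : ∀ x y, ‖G x - G y‖ ≤ L * ‖x - y‖) :
    (∀ x y, ‖((-L ^ 2 / (1 + L ^ 2)) • x + (1 / (1 + L ^ 2)) • G x) -
          ((-L ^ 2 / (1 + L ^ 2)) • y + (1 / (1 + L ^ 2)) • G y)‖ ≤
        (2 * L / (1 + L ^ 2)) * ((1 + L) / 2) * ‖x - y‖) ∧
    (0 < L → (2 * L / (1 + L ^ 2)) * ((1 + L) / 2) < 2 * L / (1 + L ^ 2)) ∧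
    (∀ x y, ‖(((1 - L ^ 2) / (1 + L ^ 2)) • ((1 / (1 - L ^ 2)) • (x + G x)) - x) -
          (((1 - L ^ 2) / (1 + L ^ 2)) • ((1 / (1 - L ^ 2)) • (y + G y)) - y)‖ ≤
        (2 * L / (1 + L ^ 2)) * ((1 + L) / 2) * ‖x - y‖) ∧
    (∀ x y, ‖((1 / (1 - L ^ 2)) • (x + G x) - (1 / (1 - L ^ 2)) • (y + G y)) - (x - y)‖ ≤
        L * ‖((1 / (1 - L ^ 2)) • (x + G x) - (1 / (1 - L ^ 2)) • (y + G y)) + (x - y)‖) := by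
  set a := (1 - L ^ 2) / (1 + L ^ 2)
  set b := 2 * L / (1 + L ^ 2)
  set F := fun z => (1 / (1 - L ^ 2)) • (z + G z)
  have hden : 1 - L ^ 2 ≠ 0 := by nlinarith
  have hconst : |-L ^ 2 / (1 + L ^ 2)| + |1 / (1 + L ^ 2)| * L = b * ((1 + L) / 2) := by
    rw [neg_div, abs_neg, abs_of_nonneg (by positivity), abs_of_pos (by positivity)]
    simp only [b]
    field_simp
    ring
  have hH := hconst ▸ norm_smul_add_smul_sub_le hG (-L ^ 2 / (1 + L ^ 2)) (1 / (1 + L ^ 2))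
  have hF : ∀ z, a • F z - z = (-L ^ 2 / (1 + L ^ 2)) • z + (1 / (1 + L ^ 2)) • G z := by
    intro z
    simp only [a, F]
    match_scalars <;> field_simp; ring
  have hFLip : ∀ x y, ‖(a • F x - x) - (a • F y - y)‖ ≤ b * ((1 + L) / 2) * ‖x - y‖ := by
    simpa only [hF] using hH
  have hb : 0 ≤ b := by positivity
  refine ⟨hH, fun hL => mul_lt_of_lt_one_right (by positivity) (by linarith), hFLip,
    fun x y => norm_sub_le_mul_norm_add_of_norm_smul_sub_le hL0 hL1 ?_⟩
  calc ‖a • (F x - F y) - (x - y)‖ = ‖(a • F x - x) - (a • F y - y)‖ := by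
        rw [smul_sub]; abel_nf
    _ ≤ b * ((1 + L) / 2) * ‖x - y‖ := hFLip x y
    _ ≤ b * ‖x - y‖ := by gcongr; exact mul_le_of_le_one_right hb (by linarith)
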